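/- arXiv:1901.11331 — 3 statements merged into one kernel-verified Lean document; each statement's English description precedes it below -/
import Mathlib

section
/- Let E be a real inner product space, φ: E → ℝ a differentiable strictly convex function with Bregman divergence d_φ, and f: [0, ∞) → ℝ differentiable, monotone nondecreasing and concave. Let x_1, …, x_n ∈ E, θ ∈ E, w_i = f'(d_φ(x_i, θ)), Σ_i w_i > 0, and θ̃ = (Σ_i w_i x_i)/(Σ_j w_j). Then the decrease of the objective is bounded below as: Σ_{i=1}^n f(d_φ(x_i, θ)) − Σ_{i=1}^n f(d_φ(x_i, θ̃)) ≥ d_φ(θ̃, θ) · Σ_{i=1}^n w_i ≥ 0. -/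
open scoped RealInnerProductSpace

/-- The Bregman divergence `d_φ(x, θ) = φ(x) − φ(θ) − ⟨x − θ, ∇φ(θ)⟩`. -/
noncomputable def bregman {E : Type*} [NormedAddCommGroup E] [InnerProductSpace ℝ E]
    [CompleteSpace E] (φ : E → ℝ) (x θ : E) : ℝ :=
  φ x - φ θ - ⟪x - θ, gradient φ θ⟫

/-!
Write `θ̃` for the weighted mean of the `x i` with weights `w i`. Summing the three-point identity
`d(x, θ) − d(x, θ̃) = d(θ̃, θ) + ⟪x − θ̃, ∇φ θ̃ − ∇φ θ⟫` against the weights kills the inner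
products, because `∑ wᵢ (xᵢ − θ̃) = 0`; so `∑ wᵢ (d(xᵢ, θ) − d(xᵢ, θ̃)) = d(θ̃, θ) ∑ wᵢ`.
Since `wᵢ = f'(d(xᵢ, θ))` and `f` is concave, the tangent inequality bounds each term
`wᵢ (d(xᵢ, θ) − d(xᵢ, θ̃))` by `f(d(xᵢ, θ)) − f(d(xᵢ, θ̃))`; both divergences lie in the domain
`[0, ∞)` of `f` because `φ` is convex.
-/

lemma ConcaveOn.le_add_derivWithin_mul_sub {S : Set ℝ} {f : ℝ → ℝ} (hf : ConcaveOn ℝ S f)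
    {a z : ℝ} (ha : a ∈ S) (hz : z ∈ S) (hfa : DifferentiableWithinAt ℝ f S a) :
    f z ≤ f a + derivWithin f S a * (z - a) := by
  rcases lt_trichotomy a z with haz | rfl | hza
  · have h := hf.slope_le_derivWithin ha hz haz hfa
    rw [slope_def_field, div_le_iff₀ (sub_pos.2 haz)] at h
    linarith
  · simp
  · have h := hf.derivWithin_le_slope hz ha hza hfa
    rw [slope_def_field, le_div_iff₀ (sub_pos.2 hza)] at h
    linarith

lemma ConvexOn.add_le_of_hasFDerivAt {F : Type*} [NormedAddCommGroup F] [NormedSpace ℝ F]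
    {s : Set F} {φ : F → ℝ} {φ' : F →L[ℝ] ℝ} {θ a : F} (hφ : ConvexOn ℝ s φ) (hθ : θ ∈ s)
    (ha : a ∈ s) (hφθ : HasFDerivAt φ φ' θ) :
    φ θ + φ' (a - θ) ≤ φ a := by
  set ℓ : ℝ →ᵃ[ℝ] F := AffineMap.lineMap θ a
  have hline : ConvexOn ℝ (ℓ ⁻¹' s) (φ ∘ ℓ) := hφ.comp_affineMap ℓ
  have hderiv : HasDerivAt (φ ∘ ℓ) (φ' (a - θ)) 0 :=
    hφθ.comp_hasDerivAt_of_eq 0 AffineMap.hasDerivAt_lineMap (by simp [ℓ])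
  have h := hline.le_slope_of_hasDerivAt (by simpa [ℓ]) (by simpa [ℓ]) one_pos hderiv
  simp only [slope_def_field, Function.comp_apply, ℓ, AffineMap.lineMap_apply_zero,
    AffineMap.lineMap_apply_one, sub_zero, div_one] at h
  linarith

lemma Finset.sum_smul_sub_centerMass {R V ι : Type*} [Field R] [AddCommGroup V] [Module R V]
    (t : Finset ι) (w : ι → R) (z : ι → V) (hw : ∑ i ∈ t, w i ≠ 0) :
    ∑ i ∈ t, w i • (z i - t.centerMass w z) = 0 := by
  rw [Finset.centerMass, Finset.sum_congr rfl fun i _ => smul_sub (w i) (z i) _,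
    Finset.sum_sub_distrib, ← Finset.sum_smul, smul_smul, mul_inv_cancel₀ hw, one_smul, sub_self]

section Bregman

variable {E : Type*} [NormedAddCommGroup E] [InnerProductSpace ℝ E] [CompleteSpace E]

lemma bregman_nonneg {s : Set E} {φ : E → ℝ} (hφ : ConvexOn ℝ s φ) {x θ : E} (hx : x ∈ s)
    (hθ : θ ∈ s) (hφθ : DifferentiableAt ℝ φ θ) :
    0 ≤ bregman φ x θ := by
  have h := hφ.add_le_of_hasFDerivAt hθ hx (hasGradientAt_iff_hasFDerivAt.1 hφθ.hasGradientAt)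
  rw [InnerProductSpace.toDual_apply_apply, real_inner_comm] at h
  unfold bregman
  linarith

lemma bregman_sub_bregman (φ : E → ℝ) (x θ θ' : E) :
    bregman φ x θ - bregman φ x θ' =
      bregman φ θ' θ + ⟪x - θ', gradient φ θ' - gradient φ θ⟫ := by
  simp only [bregman, inner_sub_left, inner_sub_right]
  ring

lemma sum_mul_bregman_sub_bregman_centerMass {ι : Type*} (φ : E → ℝ) (t : Finset ι)
    (w : ι → ℝ) (x : ι → E) (θ : E) (hw : ∑ i ∈ t, w i ≠ 0) :
    ∑ i ∈ t, w i * (bregman φ (x i) θ - bregman φ (x i) (t.centerMass w x)) =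
      bregman φ (t.centerMass w x) θ * ∑ i ∈ t, w i := by
  simp only [bregman_sub_bregman, mul_add, ← real_inner_smul_left, Finset.sum_add_distrib,
    ← sum_inner, t.sum_smul_sub_centerMass w x hw, inner_zero_left, add_zero, Finset.mul_sum,
    mul_comm]

end Bregman

theorem f_separable_objective_decrease_lower_bound_general
    {E : Type*} [NormedAddCommGroup E] [InnerProductSpace ℝ E] [CompleteSpace E]
    (φ : E → ℝ) (hφdiff : Differentiable ℝ φ)
    (hφconv : StrictConvexOn ℝ Set.univ φ)
    (f : ℝ → ℝ) (hfdiff : DifferentiableOn ℝ f (Set.Ici 0))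
    (hfconc : ConcaveOn ℝ (Set.Ici 0) f)
    (n : ℕ) (x : Fin n → E) (θ : E)
    (w : Fin n → ℝ)
    (hw : ∀ i, w i = derivWithin f (Set.Ici 0) (bregman φ (x i) θ))
    (hwpos : 0 < ∑ i, w i)
    (θnew : E) (hθnew : θnew = (∑ i, w i)⁻¹ • ∑ i, w i • x i) :
    bregman φ θnew θ * ∑ i, w i ≤
      (∑ i, f (bregman φ (x i) θ)) - ∑ i, f (bregman φ (x i) θnew) ∧
    0 ≤ bregman φ θnew θ * ∑ i, w i := by
  have hmean : θnew = Finset.univ.centerMass w x := hθnew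
  have hB : ∀ a b : E, bregman φ a b ∈ Set.Ici (0 : ℝ) := fun a b =>
    bregman_nonneg hφconv.convexOn (Set.mem_univ a) (Set.mem_univ b) (hφdiff b)
  have htangent : ∀ i, w i * (bregman φ (x i) θ - bregman φ (x i) θnew) ≤
      f (bregman φ (x i) θ) - f (bregman φ (x i) θnew) := fun i => by
    have h := hfconc.le_add_derivWithin_mul_sub (hB (x i) θ) (hB (x i) θnew)
      (hfdiff _ (hB (x i) θ))
    rw [← hw i] at h
    linarith
  refine ⟨?_, mul_nonneg (hB θnew θ) hwpos.le⟩
  calc bregman φ θnew θ * ∑ i, w i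
      = ∑ i, w i * (bregman φ (x i) θ - bregman φ (x i) θnew) := by
        rw [hmean, sum_mul_bregman_sub_bregman_centerMass φ _ w x θ hwpos.ne']
    _ ≤ ∑ i, (f (bregman φ (x i) θ) - f (bregman φ (x i) θnew)) :=
        Finset.sum_le_sum fun i _ => htangent i
    _ = _ := Finset.sum_sub_distrib ..

/-- The decrease of the `f`-separable objective under the weighted-mean update is
bounded below by `d_φ(θ̃, θ) · Σ_i w_i ≥ 0`. -/
theorem f_separable_objective_decrease_lower_bound
    {E : Type*} [NormedAddCommGroup E] [InnerProductSpace ℝ E] [CompleteSpace E]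
    (φ : E → ℝ) (hφdiff : Differentiable ℝ φ)
    (hφconv : StrictConvexOn ℝ Set.univ φ)
    (f : ℝ → ℝ) (hfdiff : DifferentiableOn ℝ f (Set.Ici 0))
    (hfmono : MonotoneOn f (Set.Ici 0)) (hfconc : ConcaveOn ℝ (Set.Ici 0) f)
    (n : ℕ) (x : Fin n → E) (θ : E)
    (w : Fin n → ℝ)
    (hw : ∀ i, w i = derivWithin f (Set.Ici 0) (bregman φ (x i) θ))
    (hwpos : 0 < ∑ i, w i)
    (θnew : E) (hθnew : θnew = (∑ i, w i)⁻¹ • ∑ i, w i • x i) :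
    bregman φ θnew θ * ∑ i, w i ≤
      (∑ i, f (bregman φ (x i) θ)) - ∑ i, f (bregman φ (x i) θnew) ∧
    0 ≤ bregman φ θnew θ * ∑ i, w i :=
  f_separable_objective_decrease_lower_bound_general φ hφdiff hφconv f hfdiff hfconc n x θ w hw
    hwpos θnew hθnew
end

section
/- (Robustness classification for α-divergence with α > 1 under the power mean.) Fix real α > 1, θ > 0, a ≥ 0, and define d_α(x, θ) = (x^α + (α − 1)θ^α − α x θ^{α−1})/(α(α − 1)) for x > 0. Then, as x → +∞: (i) if β < 1 − 1/α, then (x − θ)/(d_α(x, θ) + a)^{1−β} → 0; (ii) if β = 1 − 1/α, then (x − θ)/(d_α(x, θ) + a)^{1−β} → (α(α − 1))^{1/α} (a finite positive limit); (iii) if β > 1 − 1/α, then (x − θ)/(d_α(x, θ) + a)^{1−β} → +∞. -/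
/-!
For `x > 0` the divergence `d_α(x, θ) + a` is `x ^ α / (α (α - 1))` plus an affine function
of `x`, so for `α > 1` it is asymptotically equivalent to `x ^ α / (α (α - 1))`. Asymptotic
equivalence survives real powers and quotients, hence the influence factor is equivalent to
`(α (α - 1)) ^ (1 - β) * x ^ (1 - α (1 - β))`. The exponent equals `α (β - (1 - 1/α))`, and its
sign decides between the three regimes; at `β = 1 - 1/α` only the constant
`(α (α - 1)) ^ (1/α)` remains.
-/

open Filter Topology Asymptotics

lemma isLittleO_id_rpow_atTop {p : ℝ} (hp : 1 < p) :
    (fun x : ℝ => x) =o[atTop] fun x => x ^ p := by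
  have hpos : ∀ᶠ x : ℝ in atTop, 0 < x := eventually_gt_atTop 0
  rw [isLittleO_iff_tendsto' (hpos.mono fun x hx h0 => ?_)]
  · refine (tendsto_rpow_neg_atTop (sub_pos.2 hp)).congr' ?_
    filter_upwards [hpos] with x hx
    rw [Real.rpow_neg hx.le, Real.rpow_sub hx, Real.rpow_one, inv_div]
  · exact absurd h0 (Real.rpow_pos_of_pos hx p).ne'

lemma affine_isLittleO_rpow_atTop {p : ℝ} (hp : 1 < p) (b m : ℝ) :
    (fun x : ℝ => b + m * x) =o[atTop] fun x => x ^ p :=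
  (isLittleO_const_left.2 <| Or.inr <| tendsto_norm_atTop_atTop.comp <|
    tendsto_rpow_atTop (by linarith)).add ((isLittleO_id_rpow_atTop hp).const_mul_left m)

lemma Asymptotics.IsEquivalent.rpow_of_eventually_nonneg {ι : Type*} {l : Filter ι}
    {u v : ι → ℝ} (h : u ~[l] v) (hv : ∀ᶠ i in l, 0 ≤ v i) (r : ℝ) :
    (fun i => u i ^ r) ~[l] fun i => v i ^ r := by
  have hv' : v =ᶠ[l] fun i => max (v i) 0 := hv.mono fun i hi => (max_eq_left hi).symm
  refine ((h.congr_right hv').rpow (fun i => le_max_right _ _) (r := r)).congr_right ?_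
  exact hv'.symm.fun_comp (· ^ r)

lemma alphaDivergence_add_const_isEquivalent {α : ℝ} (hα : 1 < α) (θ a : ℝ) :
    (fun x : ℝ => (x ^ α + (α - 1) * θ ^ α - α * x * θ ^ (α - 1)) / (α * (α - 1)) + a)
      ~[atTop] fun x => x ^ α / (α * (α - 1)) := by
  have hα₀ : α ≠ 0 := by linarith
  have hα₁ : α - 1 ≠ 0 := by linarith
  have hrem := (affine_isLittleO_rpow_atTop hα ((α - 1) * θ ^ α / (α * (α - 1)) + a)
    (-(θ ^ (α - 1) / (α - 1)))).const_mul_right (inv_ne_zero (mul_ne_zero hα₀ hα₁))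
  refine (IsEquivalent.refl.add_isLittleO (hrem.congr_right fun x => inv_mul_eq_div _ _))
    |>.congr_left (Eventually.of_forall fun x => ?_)
  simp only [Pi.add_apply]
  field_simp
  ring

lemma sub_div_rpow_isEquivalent {α c θ s : ℝ} (hc : 0 < c) {h : ℝ → ℝ}
    (hh : h ~[atTop] fun x => x ^ α / c) :
    (fun x => (x - θ) / h x ^ s) ~[atTop] fun x => c ^ s * x ^ (1 - α * s) := by
  have hnum : (fun x : ℝ => x - θ) ~[atTop] fun x => x :=
    IsEquivalent.refl.sub_isLittleO (isLittleO_const_id_atTop θ)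
  have hpos : ∀ᶠ x : ℝ in atTop, 0 < x := eventually_gt_atTop 0
  refine (hnum.div (hh.rpow_of_eventually_nonneg
    (hpos.mono fun x hx => by positivity) s)).congr_right ?_
  filter_upwards [hpos] with x hx
  simp only [Pi.div_apply]
  rw [Real.div_rpow (by positivity) hc.le, ← Real.rpow_mul hx.le, Real.rpow_sub hx, Real.rpow_one]
  field_simp

theorem alpha_divergence_influence_classification_alpha_gt_one_general
    (α θ a : ℝ) (hα : 1 < α)
    (d : ℝ → ℝ)
    (hd : ∀ x : ℝ, 0 < x →
      d x = (x ^ α + (α - 1) * θ ^ α - α * x * θ ^ (α - 1)) / (α * (α - 1))) :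
    (∀ β : ℝ, β < 1 - 1 / α →
      Tendsto (fun x : ℝ => (x - θ) / (d x + a) ^ (1 - β)) atTop (𝓝 0)) ∧
    (∀ β : ℝ, β = 1 - 1 / α →
      Tendsto (fun x : ℝ => (x - θ) / (d x + a) ^ (1 - β)) atTop
        (𝓝 ((α * (α - 1)) ^ (1 / α)))) ∧
    (∀ β : ℝ, 1 - 1 / α < β →
      Tendsto (fun x : ℝ => (x - θ) / (d x + a) ^ (1 - β)) atTop atTop) := by
  have hα₀ : 0 < α := by linarith
  have hc : 0 < α * (α - 1) := mul_pos hα₀ (by linarith)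
  have hequiv (β : ℝ) : (fun x => (x - θ) / (d x + a) ^ (1 - β)) ~[atTop]
      fun x => (α * (α - 1)) ^ (1 - β) * x ^ (1 - α * (1 - β)) :=
    sub_div_rpow_isEquivalent hc <|
      (alphaDivergence_add_const_isEquivalent hα θ a).congr_left <| by
      filter_upwards [eventually_gt_atTop 0] with x hx
      rw [hd x hx]
  have hexp (β : ℝ) : 1 - α * (1 - β) = α * (β - (1 - 1 / α)) := by
    field_simp
    ring
  refine ⟨fun β hβ => (hequiv β).symm.tendsto_nhds ?_,
    fun β hβ => (hequiv β).symm.tendsto_nhds ?_, fun β hβ => (hequiv β).symm.tendsto_atTop ?_⟩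
  · have hneg : 0 < -(1 - α * (1 - β)) := by
      rw [hexp]; nlinarith
    simpa using (tendsto_rpow_neg_atTop hneg).const_mul ((α * (α - 1)) ^ (1 - β))
  · subst hβ
    simp [mul_inv_cancel₀ hα₀.ne']
  · exact (tendsto_rpow_atTop (by rw [hexp]; nlinarith)).const_mul_atTop
      (Real.rpow_pos_of_pos hc _)

/-- Robustness classification for the α-divergence with `α > 1` under the power
mean: as `x → ∞`, the influence factor `(x − θ)/(d_α(x, θ) + a)^(1−β)` is
redescending for `β < 1 − 1/α`, bounded with limit `(α(α − 1))^(1/α)` for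
`β = 1 − 1/α`, and divergent for `β > 1 − 1/α`. -/
theorem alpha_divergence_influence_classification_alpha_gt_one
    (α θ a : ℝ) (hα : 1 < α) (hθ : 0 < θ) (ha : 0 ≤ a)
    (d : ℝ → ℝ)
    (hd : ∀ x : ℝ, 0 < x →
      d x = (x ^ α + (α - 1) * θ ^ α - α * x * θ ^ (α - 1)) / (α * (α - 1))) :
    (∀ β : ℝ, β < 1 - 1 / α →
      Tendsto (fun x : ℝ => (x - θ) / (d x + a) ^ (1 - β)) atTop (𝓝 0)) ∧
    (∀ β : ℝ, β = 1 - 1 / α →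
      Tendsto (fun x : ℝ => (x - θ) / (d x + a) ^ (1 - β)) atTop
        (𝓝 ((α * (α - 1)) ^ (1 / α)))) ∧
    (∀ β : ℝ, 1 - 1 / α < β →
      Tendsto (fun x : ℝ => (x - θ) / (d x + a) ^ (1 - β)) atTop atTop) :=
  alpha_divergence_influence_classification_alpha_gt_one_general α θ a hα d hd
end

section
/- (Bounded influence for the total Bregman divergence when f' is bounded; bounded direction of the total-Bregman robustness theorem.) Let E be a real inner product space, φ: E → ℝ differentiable and strictly convex, c > 0, θ ∈ E, and tBD(x, θ) = d_φ(θ, x)/√(1 + c²‖∇φ(x)‖²) where d_φ(θ, x) = φ(θ) − φ(x) − ⟨θ − x, ∇φ(x)⟩. Let f: [0, ∞) → ℝ be differentiable and monotone nondecreasing with f'(z) ≤ M for all z ≥ 0 (e.g. f concave or linear, so that f' is nonincreasing and M = f'(0)). Then for every x ∈ E: f'(tBD(x, θ)) · ‖∇φ(x) − ∇φ(θ)‖ / √(1 + c²‖∇φ(x)‖²) ≤ M (1/c + ‖∇φ(θ)‖), i.e. the influence function is bounded uniformly in the outlier x. -/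
open scoped RealInnerProductSpace

/-- The total Bregman divergence
`tBD(x, θ) = (φ(θ) − φ(x) − ⟨θ − x, ∇φ(x)⟩)/√(1 + c²‖∇φ(x)‖²)`. -/
noncomputable def tBD {E : Type*} [NormedAddCommGroup E] [InnerProductSpace ℝ E]
    [CompleteSpace E] (φ : E → ℝ) (c : ℝ) (x θ : E) : ℝ :=
  (φ θ - φ x - ⟪θ - x, gradient φ x⟫) / Real.sqrt (1 + c ^ 2 * ‖gradient φ x‖ ^ 2)

/-!
By convexity of `φ` the Bregman divergence, hence `tBD(x, θ)`, is nonnegative, so monotonicity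
of `f` and the bound on `f'` give `0 ≤ f'(tBD(x, θ)) ≤ M`. The remaining factor is bounded by the
triangle inequality, using `c ‖∇φ(x)‖ ≤ √(1 + c²‖∇φ(x)‖²)` and `1 ≤ √(1 + c²‖∇φ(x)‖²)`.
-/

theorem ConvexOn.add_fderiv_sub_le {E : Type*} [NormedAddCommGroup E] [NormedSpace ℝ E]
    {s : Set E} {φ : E → ℝ} {φ' : E →L[ℝ] ℝ} {x y : E} (hφ : ConvexOn ℝ s φ)
    (hx : x ∈ s) (hy : y ∈ s) (hφ' : HasFDerivAt φ φ' x) :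
    φ x + φ' (y - x) ≤ φ y := by
  let ℓ : ℝ →ᵃ[ℝ] E := AffineMap.lineMap x y
  have hline : ConvexOn ℝ (ℓ ⁻¹' s) (φ ∘ ℓ) := hφ.comp_affineMap ℓ
  have hderiv : HasDerivAt (φ ∘ ℓ) (φ' (y - x)) 0 := by
    have hℓ : HasDerivAt ℓ (y - x) 0 := AffineMap.hasDerivAt_lineMap
    exact hφ'.comp_hasDerivAt_of_eq 0 hℓ (by simp [ℓ])
  have hslope := hline.le_slope_of_hasDerivAt (x := 0) (y := 1) (by simpa [ℓ]) (by simpa [ℓ])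
    one_pos hderiv
  simpa [ℓ, slope_def_field, le_sub_iff_add_le'] using hslope

theorem tBD_nonneg {E : Type*} [NormedAddCommGroup E] [InnerProductSpace ℝ E] [CompleteSpace E]
    {φ : E → ℝ} {x : E} (hφdiff : DifferentiableAt ℝ φ x) (hφconv : ConvexOn ℝ Set.univ φ)
    (c : ℝ) (θ : E) : 0 ≤ tBD φ c x θ := by
  have htangent := hφconv.add_fderiv_sub_le (Set.mem_univ x) (Set.mem_univ θ)
    hφdiff.hasGradientAt.hasFDerivAt
  rw [InnerProductSpace.toDual_apply_apply, real_inner_comm] at htangent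
  exact div_nonneg (by linarith) (Real.sqrt_nonneg _)

theorem one_le_sqrt_one_add_sq_mul_sq (c t : ℝ) : 1 ≤ √(1 + c ^ 2 * t ^ 2) :=
  Real.one_le_sqrt.mpr (le_add_of_nonneg_right (by positivity))

theorem div_sqrt_one_add_sq_mul_sq_le {c : ℝ} (hc : 0 < c) (t : ℝ) :
    t / √(1 + c ^ 2 * t ^ 2) ≤ 1 / c := by
  have hct : c * t ≤ √(1 + c ^ 2 * t ^ 2) :=
    Real.le_sqrt_of_sq_le (by nlinarith)
  rw [div_le_div_iff₀ (by linarith [one_le_sqrt_one_add_sq_mul_sq c t]) hc]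
  linarith

theorem norm_sub_div_sqrt_one_add_sq_mul_sq_le {E : Type*} [SeminormedAddCommGroup E]
    {c : ℝ} (hc : 0 < c) (a b : E) :
    ‖a - b‖ / √(1 + c ^ 2 * ‖a‖ ^ 2) ≤ 1 / c + ‖b‖ := by
  have hs := one_le_sqrt_one_add_sq_mul_sq c ‖a‖
  calc ‖a - b‖ / √(1 + c ^ 2 * ‖a‖ ^ 2)
      ≤ ‖a‖ / √(1 + c ^ 2 * ‖a‖ ^ 2) + ‖b‖ / √(1 + c ^ 2 * ‖a‖ ^ 2) := by
        rw [← add_div]; gcongr; exact norm_sub_le a b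
    _ ≤ 1 / c + ‖b‖ :=
        add_le_add (div_sqrt_one_add_sq_mul_sq_le hc ‖a‖) (div_le_self (norm_nonneg b) hs)

theorem total_bregman_influence_bounded_of_deriv_bounded_general
    {E : Type*} [NormedAddCommGroup E] [InnerProductSpace ℝ E] [CompleteSpace E]
    (φ : E → ℝ) (hφdiff : Differentiable ℝ φ)
    (hφconv : StrictConvexOn ℝ Set.univ φ)
    (c : ℝ) (hc : 0 < c) (θ : E)
    (f : ℝ → ℝ)
    (hfmono : MonotoneOn f (Set.Ici 0))
    (M : ℝ) (hM : ∀ z : ℝ, 0 ≤ z → derivWithin f (Set.Ici 0) z ≤ M) :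
    ∀ x : E,
      derivWithin f (Set.Ici 0) (tBD φ c x θ) *
          (‖gradient φ x - gradient φ θ‖ /
            Real.sqrt (1 + c ^ 2 * ‖gradient φ x‖ ^ 2))
        ≤ M * (1 / c + ‖gradient φ θ‖) := by
  intro x
  have hM_at := hM _ (tBD_nonneg (hφdiff x) hφconv.convexOn c θ)
  exact mul_le_mul hM_at (norm_sub_div_sqrt_one_add_sq_mul_sq_le hc _ _) (by positivity)
    (hfmono.derivWithin_nonneg.trans hM_at)

/-- Bounded influence for the total Bregman divergence when `f'` is bounded:
if `f` is nondecreasing and `f' ≤ M` on `[0, ∞)`, then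
`f'(tBD(x, θ)) ‖∇φ(x) − ∇φ(θ)‖/√(1 + c²‖∇φ(x)‖²) ≤ M(1/c + ‖∇φ(θ)‖)`
uniformly in the outlier `x`. -/
theorem total_bregman_influence_bounded_of_deriv_bounded
    {E : Type*} [NormedAddCommGroup E] [InnerProductSpace ℝ E] [CompleteSpace E]
    (φ : E → ℝ) (hφdiff : Differentiable ℝ φ)
    (hφconv : StrictConvexOn ℝ Set.univ φ)
    (c : ℝ) (hc : 0 < c) (θ : E)
    (f : ℝ → ℝ) (hfdiff : DifferentiableOn ℝ f (Set.Ici 0))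
    (hfmono : MonotoneOn f (Set.Ici 0))
    (M : ℝ) (hM : ∀ z : ℝ, 0 ≤ z → derivWithin f (Set.Ici 0) z ≤ M) :
    ∀ x : E,
      derivWithin f (Set.Ici 0) (tBD φ c x θ) *
          (‖gradient φ x - gradient φ θ‖ /
            Real.sqrt (1 + c ^ 2 * ‖gradient φ x‖ ^ 2))
        ≤ M * (1 / c + ‖gradient φ θ‖) :=
  total_bregman_influence_bounded_of_deriv_bounded_general φ hφdiff hφconv c hc θ f hfmono M hM
end
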